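/- Let N ≥ 7 be an integer and let t ∈ (0,1) satisfy γ₂(t) > 0. Define α₁(t) = (−3τ(t) + √(9·τ(t)² + 4·γ₂(t)))/2. Then ι₂(t) := γ₂'(t) + 2·α₁(t)·τ'(t) > 0, where γ₂' and τ' denote the derivatives of γ₂ and τ (in particular τ'(t) = −(N−2)·t^{-(N−1)}). -/
import Mathlib


open Real Filter Set

/-- `τ(t) = t^{-(N-2)} − 1`. -/
noncomputable def tau (N : ℕ) (t : ℝ) : ℝ := t ^ (-((N : ℝ) - 2)) - 1

/-- `γ₂(t) = (1−t²)^{-(N−2)} − 2·(√2·t)^{-(N−2)} + 2·(t⁴+1)^{-(N−2)/2} − (2t)^{-(N−2)} + (t²+1)^{-(N−2)}`. -/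
noncomputable def gamma2 (N : ℕ) (t : ℝ) : ℝ :=
  (1 - t ^ 2) ^ (-((N : ℝ) - 2)) - 2 * (Real.sqrt 2 * t) ^ (-((N : ℝ) - 2)) +
    2 * (t ^ 4 + 1) ^ (-((N : ℝ) - 2) / 2) - (2 * t) ^ (-((N : ℝ) - 2)) +
    (t ^ 2 + 1) ^ (-((N : ℝ) - 2))

/-- `α₁(t) = (−3τ(t) + √(9τ(t)² + 4γ₂(t)))/2`. -/
noncomputable def alpha1 (N : ℕ) (t : ℝ) : ℝ :=
  (-3 * tau N t + Real.sqrt (9 * (tau N t) ^ 2 + 4 * gamma2 N t)) / 2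

set_option maxHeartbeats 1000000 in
/-- If `γ₂(t) > 0` then `t > 51/100`. -/
lemma aux_step1 (m t : ℝ) (hm : 5 ≤ m) (ht0 : 0 < t) (ht51 : t ≤ 51/100)
    (hg : 0 < (1-t^2)^(-m) - 2*(Real.sqrt 2*t)^(-m) + 2*(t^4+1)^(-m/2) - (2*t)^(-m) + (t^2+1)^(-m)) :
    False := by
  have hm0 : (0:ℝ) < m := by linarith
  have h1t2 : (7399/10000 : ℝ) ≤ 1 - t^2 := by nlinarith
  have hs2 : Real.sqrt 2 ≤ 141422/100000 := by
    rw [show (141422/100000:ℝ) = Real.sqrt ((141422/100000)^2) from (Real.sqrt_sq (by norm_num)).symm]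
    exact Real.sqrt_le_sqrt (by norm_num)
  have hs2pos : (0:ℝ) < Real.sqrt 2 := Real.sqrt_pos.2 (by norm_num)
  have hst : (0:ℝ) < Real.sqrt 2 * t := by positivity
  have hstle : Real.sqrt 2 * t ≤ 72126/100000 := by nlinarith
  have hX : (1-t^2)^(-m) ≤ (7399/10000:ℝ)^(-m) :=
    Real.rpow_le_rpow_of_nonpos (by norm_num) h1t2 (by linarith)
  have hB : (72126/100000:ℝ)^(-m) ≤ (Real.sqrt 2 * t)^(-m) :=
    Real.rpow_le_rpow_of_nonpos hst hstle (by linarith)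
  have hF : (t^4+1:ℝ)^(-m/2) ≤ 1 :=
    Real.rpow_le_one_of_one_le_of_nonpos (by nlinarith) (by linarith)
  have hG : (t^2+1:ℝ)^(-m) ≤ 1 :=
    Real.rpow_le_one_of_one_le_of_nonpos (by nlinarith) (by linarith)
  have hD : (0:ℝ) < (2*t)^(-m) := Real.rpow_pos_of_pos (by linarith) _
  set u : ℝ := (7399/10000:ℝ)^(-m) with hu_def
  have hu : (9/2:ℝ) ≤ u := by
    rw [hu_def, Real.rpow_neg (by norm_num)]
    rw [show (9/2:ℝ) = ((2/9:ℝ))⁻¹ by norm_num]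
    apply inv_anti₀ (by positivity)
    calc (7399/10000:ℝ)^m ≤ (7399/10000:ℝ)^(5:ℝ) :=
          Real.rpow_le_rpow_of_exponent_ge (by norm_num) (by norm_num) hm
      _ = (7399/10000:ℝ)^(5:ℕ) := by rw [show ((5:ℝ)) = ((5:ℕ):ℝ) by norm_num, Real.rpow_natCast]
      _ ≤ 2/9 := by norm_num
  have hratio : u * (227/200) ≤ (72126/100000:ℝ)^(-m) := by
    have key : (72126/100000:ℝ)^(-m) = u * ((73990/72126:ℝ)^m) := by
      rw [hu_def, Real.rpow_neg (by norm_num), Real.rpow_neg (by norm_num),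
        ← Real.inv_rpow (by norm_num : (0:ℝ) ≤ 7399/10000),
        ← Real.inv_rpow (by norm_num : (0:ℝ) ≤ 72126/100000),
        ← Real.mul_rpow (by norm_num) (by norm_num)]
      norm_num
    rw [key]
    have : (227/200:ℝ) ≤ (73990/72126:ℝ)^m := by
      calc (227/200:ℝ) ≤ (73990/72126:ℝ)^(5:ℕ) := by norm_num
        _ = (73990/72126:ℝ)^(5:ℝ) := by rw [show ((5:ℝ)) = ((5:ℕ):ℝ) by norm_num, Real.rpow_natCast]
        _ ≤ (73990/72126:ℝ)^m := Real.rpow_le_rpow_of_exponent_le (by norm_num) hm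
    nlinarith [hu]
  nlinarith [hB, hX, hF, hG, hD, hu, hratio]

set_option maxHeartbeats 1000000 in
/-- The core inequality: `2γ₂ < 3 t (1 - t^m) · (γ₂'/m)`. -/
lemma aux_core (m t : ℝ) (hm : 5 ≤ m) (ht0 : 0 < t) (ht1 : t < 1) (ht51 : 51/100 < t) :
    2 * ((1-t^2)^(-m) - 2*(Real.sqrt 2*t)^(-m) + 2*(t^4+1)^(-m/2) - (2*t)^(-m) + (t^2+1)^(-m))
      < 3*(t*(1 - t^m)) * (2*t*(1-t^2)^(-m-1) + 2*Real.sqrt 2*(Real.sqrt 2*t)^(-m-1)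
          + 2*(2*t)^(-m-1) - 4*t^3*(t^4+1)^(-m/2-1) - 2*t*(t^2+1)^(-m-1)) := by
  have hm0 : (0:ℝ) < m := by linarith
  have h1t2 : (0:ℝ) < 1 - t^2 := by nlinarith
  have hs2pos : (0:ℝ) < Real.sqrt 2 := Real.sqrt_pos.2 (by norm_num)
  have hst : (0:ℝ) < Real.sqrt 2 * t := by positivity
  have h2t : (0:ℝ) < 2*t := by linarith
  have ht41 : (0:ℝ) < t^4+1 := by positivity
  have ht21 : (0:ℝ) < t^2+1 := by positivity
  have ht2le : t^2 ≤ 1 := by nlinarith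
  have ht4le : t^4 ≤ 1 := pow_le_one₀ ht0.le ht1.le
  have hw : (0:ℝ) < 1 - t^m := by
    have := Real.rpow_lt_one ht0.le ht1 hm0; linarith
  have hA1 : (0:ℝ) < (1-t^2)^(-m-1) := Real.rpow_pos_of_pos h1t2 _
  have hB1 : (0:ℝ) < (Real.sqrt 2*t)^(-m-1) := Real.rpow_pos_of_pos hst _
  have hC : (0:ℝ) < (t^4+1)^(-m/2-1) := Real.rpow_pos_of_pos ht41 _
  have hD1 : (0:ℝ) < (2*t)^(-m-1) := Real.rpow_pos_of_pos h2t _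
  have hE : (0:ℝ) < (t^2+1)^(-m-1) := Real.rpow_pos_of_pos ht21 _
  have rX : (1-t^2)^(-m) = (1-t^2)^(-m-1) * (1-t^2) := by
    rw [← Real.rpow_add_one h1t2.ne' (-m-1)]; norm_num
  have rB : (Real.sqrt 2*t)^(-m) = (Real.sqrt 2*t)^(-m-1) * (Real.sqrt 2*t) := by
    rw [← Real.rpow_add_one hst.ne' (-m-1)]; norm_num
  have rD : (2*t)^(-m) = (2*t)^(-m-1) * (2*t) := by
    rw [← Real.rpow_add_one h2t.ne' (-m-1)]; norm_num
  have rF : (t^4+1)^(-m/2) = (t^4+1)^(-m/2-1) * (t^4+1) := by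
    rw [← Real.rpow_add_one ht41.ne' (-m/2-1)]; norm_num
  have rG : (t^2+1)^(-m) = (t^2+1)^(-m-1) * (t^2+1) := by
    rw [← Real.rpow_add_one ht21.ne' (-m-1)]; norm_num
  have htm5 : t^m ≤ t^(5:ℕ) := by
    calc t^m ≤ t^(5:ℝ) := Real.rpow_le_rpow_of_exponent_ge ht0 ht1.le hm
      _ = t^(5:ℕ) := by rw [show ((5:ℝ)) = ((5:ℕ):ℝ) by norm_num, Real.rpow_natCast]
  have hd : (0:ℝ) ≤ t - 51/100 := by linarith
  have hpoly : (0:ℝ) ≤ 3*t^6+3*t^5+3*t^4+3*t^3+3*t^2-t-1 := by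
    nlinarith [hd, pow_nonneg hd 2, pow_nonneg hd 3, pow_nonneg hd 4, pow_nonneg hd 5,
      pow_nonneg hd 6]
  have f1 : 2*(1-t^2) ≤ 6*(t^2*(1-t^m)) := by
    nlinarith [mul_nonneg (sub_nonneg.2 ht1.le) hpoly,
      mul_nonneg (sq_nonneg t) (sub_nonneg.2 htm5)]
  have f1' : 2*(1-t^2) * (1-t^2)^(-m-1) ≤ 6*(t^2*(1-t^m)) * (1-t^2)^(-m-1) :=
    mul_le_mul_of_nonneg_right f1 hA1.le
  have hB2 : (Real.sqrt 2*t)^(-m) = (2*t^2)^(-m/2) := by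
    have h2 : (Real.sqrt 2*t)^(2:ℕ) = 2*t^2 := by
      rw [mul_pow, sq_sqrt (by norm_num : (0:ℝ) ≤ 2)]
    calc (Real.sqrt 2*t)^(-m) = (Real.sqrt 2*t)^(((2:ℕ):ℝ)*(-m/2)) := by
          rw [show ((2:ℕ):ℝ)*(-m/2) = -m by push_cast; ring]
      _ = ((Real.sqrt 2*t)^(2:ℕ))^(-m/2) := Real.rpow_natCast_mul hst.le 2 _
      _ = (2*t^2)^(-m/2) := by rw [h2]
  have f4 : (t^4+1)^(-m/2) ≤ (Real.sqrt 2*t)^(-m) := by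
    rw [hB2]
    exact Real.rpow_le_rpow_of_nonpos (by positivity) (by nlinarith [sq_nonneg (t^2-1)])
      (by linarith)
  have f2 : 2*t^4*(t^4+1)^(-m/2-1) ≤ (Real.sqrt 2*t)^(-m) := by
    calc 2*t^4*(t^4+1)^(-m/2-1) ≤ (t^4+1)*(t^4+1)^(-m/2-1) :=
          mul_le_mul_of_nonneg_right (by nlinarith) hC.le
      _ = (t^4+1)^(-m/2) := by rw [rF]; ring
      _ ≤ (Real.sqrt 2*t)^(-m) := f4
  have f2' : (1-t^m) * (2*t^4*(t^4+1)^(-m/2-1)) ≤ (1-t^m) * ((Real.sqrt 2*t)^(-m)) :=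
    mul_le_mul_of_nonneg_left f2 hw.le
  have f5 : (t^2+1)^(-m) < (2*t)^(-m) :=
    Real.rpow_lt_rpow_of_neg h2t (by nlinarith [sq_nonneg (t-1)]) (by linarith)
  have f3 : 2*t^2*(t^2+1)^(-m-1) ≤ (2*t)^(-m) := by
    calc 2*t^2*(t^2+1)^(-m-1) ≤ (t^2+1)*(t^2+1)^(-m-1) :=
          mul_le_mul_of_nonneg_right (by nlinarith) hE.le
      _ = (t^2+1)^(-m) := by rw [rG]; ring
      _ ≤ (2*t)^(-m) := f5.le
  have f3' : (1-t^m) * (2*t^2*(t^2+1)^(-m-1)) ≤ (1-t^m) * ((2*t)^(-m)) :=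
    mul_le_mul_of_nonneg_left f3 hw.le
  rw [rB] at f4 f2' ⊢
  rw [rD] at f3' f5 ⊢
  rw [rX, rG]
  linarith [f1', f2', f3', f4, f5]

set_option maxHeartbeats 1000000 in
theorem stmt_14 (N : ℕ) (hN : 7 ≤ N) (t : ℝ) (ht : t ∈ Ioo (0 : ℝ) 1)
    (hg : 0 < gamma2 N t) :
    0 < deriv (gamma2 N) t + 2 * alpha1 N t * deriv (tau N) t := by
  obtain ⟨ht0, ht1⟩ := ht
  obtain ⟨m, hm_def⟩ : ∃ m : ℝ, m = (N:ℝ) - 2 := ⟨_, rfl⟩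
  have hm : (5:ℝ) ≤ m := by
    have h7 : (7:ℝ) ≤ (N:ℝ) := by exact_mod_cast hN
    rw [hm_def]; linarith
  have hm0 : (0:ℝ) < m := by linarith
  have h1t2 : (0:ℝ) < 1 - t^2 := by nlinarith
  have hs2pos : (0:ℝ) < Real.sqrt 2 := Real.sqrt_pos.2 (by norm_num)
  have hst : (0:ℝ) < Real.sqrt 2 * t := by positivity
  have h2t : (0:ℝ) < 2*t := by linarith
  have ht41 : (0:ℝ) < t^4+1 := by positivity
  have ht21 : (0:ℝ) < t^2+1 := by positivity
  -- unfolded descriptions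
  have hfun : gamma2 N = fun y : ℝ => (1-y^2)^(-m) - 2*(Real.sqrt 2*y)^(-m)
      + 2*(y^4+1)^(-m/2) - (2*y)^(-m) + (y^2+1)^(-m) := by
    funext y; rw [hm_def]; rfl
  have hfun_tau : tau N = fun y : ℝ => y^(-m) - 1 := by
    funext y; rw [hm_def]; rfl
  have hgval : gamma2 N t = (1-t^2)^(-m) - 2*(Real.sqrt 2*t)^(-m)
      + 2*(t^4+1)^(-m/2) - (2*t)^(-m) + (t^2+1)^(-m) := by rw [hfun]
  have htauval : tau N t = t^(-m) - 1 := by rw [hfun_tau]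
  -- t > 51/100
  have ht51 : 51/100 < t := by
    by_contra h
    push_neg at h
    rw [hgval] at hg
    exact aux_step1 m t hm ht0 h hg
  -- τ > 0
  have htau_pos : 0 < tau N t := by
    rw [htauval]
    have h1 : (1:ℝ) < t ^ (-m) := by
      rw [Real.one_lt_rpow_iff_of_pos ht0]
      right; exact ⟨ht1, by linarith⟩
    linarith
  -- derivative of tau
  have hdtau : deriv (tau N) t = 1 * -m * t ^ (-m-1) := by
    rw [hfun_tau]
    have h : HasDerivAt (fun y : ℝ => y ^ (-m) - 1) (1 * -m * t ^ (-m - 1)) t :=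
      ((hasDerivAt_id t).rpow_const (Or.inl ht0.ne')).sub_const 1
    exact h.deriv
  -- derivative of gamma2
  have h0a : HasDerivAt (fun y:ℝ => 1 - y^2) (-(2*t)) t := by
    simpa using (hasDerivAt_pow 2 t).const_sub 1
  have h0b : HasDerivAt (fun y:ℝ => Real.sqrt 2 * y) (Real.sqrt 2) t := by
    simpa using (hasDerivAt_id t).const_mul (Real.sqrt 2)
  have h0c : HasDerivAt (fun y:ℝ => y^4+1) (4*t^3) t := by
    simpa using (hasDerivAt_pow 4 t).add_const 1
  have h0d : HasDerivAt (fun y:ℝ => 2*y) (2:ℝ) t := by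
    simpa using (hasDerivAt_id t).const_mul (2:ℝ)
  have h0e : HasDerivAt (fun y:ℝ => y^2+1) (2*t) t := by
    simpa using (hasDerivAt_pow 2 t).add_const 1
  have c1 : HasDerivAt (fun y:ℝ => (1-y^2)^(-m)) (-(2*t) * -m * (1-t^2)^(-m-1)) t :=
    h0a.rpow_const (Or.inl h1t2.ne')
  have c2 : HasDerivAt (fun y:ℝ => (Real.sqrt 2*y)^(-m))
      (Real.sqrt 2 * -m * (Real.sqrt 2*t)^(-m-1)) t :=
    h0b.rpow_const (Or.inl hst.ne')
  have c3 : HasDerivAt (fun y:ℝ => (y^4+1)^(-m/2)) (4*t^3 * (-m/2) * (t^4+1)^(-m/2-1)) t :=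
    h0c.rpow_const (Or.inl ht41.ne')
  have c4 : HasDerivAt (fun y:ℝ => (2*y)^(-m)) (2 * -m * (2*t)^(-m-1)) t :=
    h0d.rpow_const (Or.inl h2t.ne')
  have c5 : HasDerivAt (fun y:ℝ => (y^2+1)^(-m)) (2*t * -m * (t^2+1)^(-m-1)) t :=
    h0e.rpow_const (Or.inl ht21.ne')
  have hgd : HasDerivAt (fun y : ℝ => (1-y^2)^(-m) - 2*(Real.sqrt 2*y)^(-m)
      + 2*(y^4+1)^(-m/2) - (2*y)^(-m) + (y^2+1)^(-m))
      (-(2*t) * -m * (1-t^2)^(-m-1) - 2*(Real.sqrt 2 * -m * (Real.sqrt 2*t)^(-m-1))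
        + 2*(4*t^3 * (-m/2) * (t^4+1)^(-m/2-1)) - 2 * -m * (2*t)^(-m-1)
        + 2*t * -m * (t^2+1)^(-m-1)) t :=
    (((c1.sub (c2.const_mul 2)).add (c3.const_mul 2)).sub c4).add c5
  have hgderiv : deriv (gamma2 N) t
      = m * (2*t*(1-t^2)^(-m-1) + 2*Real.sqrt 2*(Real.sqrt 2*t)^(-m-1)
          + 2*(2*t)^(-m-1) - 4*t^3*(t^4+1)^(-m/2-1) - 2*t*(t^2+1)^(-m-1)) := by
    rw [hfun, hgd.deriv]; ring
  -- α₁ ≤ γ₂/(3τ)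
  have halpha : alpha1 N t ≤ gamma2 N t / (3 * tau N t) := by
    have hsq : Real.sqrt (9*(tau N t)^2 + 4*gamma2 N t)
        ≤ 3*tau N t + 2*(gamma2 N t)/(3*tau N t) := by
      rw [show (3*tau N t + 2*(gamma2 N t)/(3*tau N t))
          = Real.sqrt ((3*tau N t + 2*(gamma2 N t)/(3*tau N t))^2) from
          (Real.sqrt_sq (by positivity)).symm]
      apply Real.sqrt_le_sqrt
      have h0 : (0:ℝ) < tau N t := htau_pos
      have hexp : (3*tau N t + 2*(gamma2 N t)/(3*tau N t))^2
          = 9*(tau N t)^2 + 4*gamma2 N t + 4*(gamma2 N t)^2/(9*(tau N t)^2) := by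
        field_simp; ring
      rw [hexp]
      have : 0 ≤ 4*(gamma2 N t)^2/(9*(tau N t)^2) := by positivity
      linarith
    have halt : alpha1 N t = (-3*tau N t + Real.sqrt (9*(tau N t)^2 + 4*gamma2 N t))/2 := rfl
    rw [halt]
    have h2 : 2*(gamma2 N t)/(3*tau N t) = 2*(gamma2 N t/(3*tau N t)) := by ring
    rw [h2] at hsq
    linarith
  -- key inequality from aux_core
  have key := aux_core m t hm ht0 ht1 ht51
  rw [← hgval] at key
  -- rewrite t(1-t^m) as τ·t^(m+1)
  have htauw : tau N t * t^(m+1) = t*(1-t^m) := by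
    rw [htauval, sub_mul, ← Real.rpow_add ht0, show -m+(m+1) = (1:ℝ) by ring, Real.rpow_one,
      Real.rpow_add_one ht0.ne' m]
    ring
  rw [← htauw] at key
  have hT : (0:ℝ) < t^(-m-1) := Real.rpow_pos_of_pos ht0 _
  have hTt : t^(-m-1) * t^(m+1) = 1 := by
    rw [← Real.rpow_add ht0]; norm_num
  obtain ⟨P, hP_def⟩ : ∃ P : ℝ, P = 2*t*(1-t^2)^(-m-1) + 2*Real.sqrt 2*(Real.sqrt 2*t)^(-m-1)
      + 2*(2*t)^(-m-1) - 4*t^3*(t^4+1)^(-m/2-1) - 2*t*(t^2+1)^(-m-1) := ⟨_, rfl⟩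
  rw [← hP_def] at key hgderiv
  have key3 : 2 * gamma2 N t * t^(-m-1) < 3 * tau N t * P := by
    have h := mul_lt_mul_of_pos_right key hT
    have e : 3*(tau N t*t^(m+1))*P*t^(-m-1) = 3*tau N t*P := by
      calc 3*(tau N t*t^(m+1))*P*t^(-m-1) = 3*tau N t*P*(t^(-m-1)*t^(m+1)) := by ring
        _ = 3*tau N t*P := by rw [hTt]; ring
    rw [e] at h
    exact h
  rw [hgderiv, hdtau]
  have hαT : alpha1 N t * (2*m*t^(-m-1)) ≤ gamma2 N t/(3*tau N t) * (2*m*t^(-m-1)) :=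
    mul_le_mul_of_nonneg_right halpha (by positivity)
  have hfin : gamma2 N t/(3*tau N t) * (2*m*t^(-m-1)) < m*P := by
    rw [div_mul_eq_mul_div, div_lt_iff₀ (by positivity : (0:ℝ) < 3*tau N t)]
    calc gamma2 N t*(2*m*t^(-m-1)) = (2*gamma2 N t*t^(-m-1))*m := by ring
      _ < (3*tau N t*P)*m := mul_lt_mul_of_pos_right key3 hm0
      _ = m*P*(3*tau N t) := by ring
  have hcomb : alpha1 N t * (2*m*t^(-m-1)) < m*P := lt_of_le_of_lt hαT hfin
  rw [show 2*alpha1 N t*(1 * -m * t^(-m-1)) = -(alpha1 N t * (2*m*t^(-m-1))) from by ring]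
  linarith [hcomb]
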